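/- (Binary BCH-dihedral codes have prescribed minimum distance.) Let L be a finite field with 4 elements containing an element α with α² + α + 1 = 0, let E be a finite field extension of L, let m ≥ 3 be odd, and let ω ∈ E have multiplicative order exactly m. Suppose there exists an integer s ≥ 0 with 2^{2s+1} ≡ −1 (mod m). Let b ≥ 0 and δ with 2 ≤ δ ≤ m + 1, and set p = lcm{ M_{ω^b}, M_{ω^{b+1}}, …, M_{ω^{b+δ−2}} } ∈ L[x], where M_{ω^j} is the minimal polynomial of ω^j over L, and set P = α · ( p(x^{(m−1)/2}) )² ∈ L[x]. Then for all t₁, t₂ ∈ L[x], the remainder c of t₁·p + t₂·P upon division by x^m − 1 satisfies: if c ≠ 0 then c has at least δ nonzero coefficients. In particular, the binary dihedral code of length 2m generated by p has minimum distance at least δ. -/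

import Mathlib

/-!
The BCH argument. Every `z = ω^(b+j)`, `j < δ - 1`, is a root of `p`, and also of `P`: from
`2·4^s ≡ -1 ≡ 2·(m-1)/2 (mod m)` we get `z^((m-1)/2) = z^(4^s)`, and the Frobenius of `F_4`
gives `p(z^(4^s)) = p(z)^(4^s) = 0`. Since `z^m = 1`, `z` is then a root of the remainder `c`,
which has degree `< m = ord ω`. If `c` had only `n < δ` nonzero coefficients, the first `n` of
these root equations would be a Vandermonde system in the distinct nodes `ω^k`, `k ∈ supp c`,
forcing `c = 0`.
-/

open Polynomial

theorem FiniteField.aeval_pow_card_pow {K R : Type*} [Field K] [Fintype K] [CommRing R]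
    [Algebra K R] (f : K[X]) (z : R) (s : ℕ) :
    aeval (z ^ Fintype.card K ^ s) f = aeval z f ^ Fintype.card K ^ s := by
  simpa only [AlgHom.coe_pow, coe_frobeniusAlgHom, pow_iterate] using
    aeval_algHom_apply (frobeniusAlgHom K R ^ s) z f

theorem FiniteField.aeval_comp_X_pow_eq_zero {K R : Type*} [Field K] [Fintype K] [CommRing R]
    [Algebra K R] {f : K[X]} {z : R} {k s : ℕ} (hk : z ^ k = z ^ Fintype.card K ^ s)
    (hf : aeval z f = 0) : aeval z (f.comp (X ^ k)) = 0 := by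
  rw [aeval_comp, map_pow, aeval_X, hk, aeval_pow_card_pow, hf, zero_pow (by positivity)]

theorem Finset.eq_zero_of_forall_sum_mul_pow_eq_zero {R ι : Type*} [CommRing R] [IsDomain R]
    {s : Finset ι} {f v : ι → R} (hf : Set.InjOn f s)
    (hfv : ∀ r < s.card, ∑ i ∈ s, v i * f i ^ r = 0) : ∀ i ∈ s, v i = 0 := by
  intro i hi
  let e := s.equivFin.symm
  have hinj : Function.Injective (f ∘ (↑) ∘ e) := fun a a' h =>
    e.injective (Subtype.ext (hf (e a).2 (e a').2 h))
  have hsum (r : Fin s.card) : ∑ j, (v ∘ (↑) ∘ e) j * (f ∘ (↑) ∘ e) j ^ (r : ℕ) = 0 := by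
    rw [← hfv r r.2, ← s.sum_coe_sort]
    exact e.sum_comp (fun j : s => v j * f j ^ (r : ℕ))
  have hv := Matrix.eq_zero_of_forall_pow_sum_mul_pow_eq_zero hinj hsum
  simpa [e] using congrFun hv (s.equivFin ⟨i, hi⟩)

theorem Polynomial.lt_card_support_of_aeval_pow_eq_zero {K E : Type*} [Field K] [Field E]
    [Algebra K E] {ω : E} {c : K[X]} (hc : c ≠ 0) (hdeg : c.natDegree < orderOf ω) {b n : ℕ}
    (hroot : ∀ j < n, aeval (ω ^ (b + j)) c = 0) : n < c.support.card := by
  by_contra! hn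
  have hω : ω ≠ 0 := by
    rintro rfl
    simp [orderOf_zero] at hdeg
  have hlt : ∀ k ∈ c.support, k < orderOf ω := fun k hk =>
    (le_natDegree_of_mem_supp k hk).trans_lt hdeg
  have hinj : Set.InjOn (ω ^ ·) c.support := pow_injOn_Iio_orderOf.mono hlt
  have hsum : ∀ r < c.support.card,
      ∑ k ∈ c.support, algebraMap K E (c.coeff k) * ω ^ (b * k) * (ω ^ k) ^ r = 0 := by
    intro r hr
    rw [← hroot r (hr.trans_le hn), aeval_def, eval₂_eq_sum, Polynomial.sum_def]
    refine Finset.sum_congr rfl fun k _ => ?_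
    ring
  obtain ⟨k, hk⟩ := support_nonempty.2 hc
  have := Finset.eq_zero_of_forall_sum_mul_pow_eq_zero hinj hsum k hk
  exact mem_support_iff.1 hk (by simpa [hω] using this)

theorem Nat.sub_one_div_two_modEq_four_pow {m s : ℕ} (hodd : Odd m)
    (hs : (2 : ZMod m) ^ (2 * s + 1) = -1) : (m - 1) / 2 ≡ 4 ^ s [MOD m] := by
  obtain ⟨k, rfl⟩ := hodd
  rw [show (2 * k + 1 - 1) / 2 = k by omega, ← ZMod.natCast_eq_natCast_iff]
  have h2 : IsUnit (2 : ZMod (2 * k + 1)) := by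
    simpa using (ZMod.isUnit_iff_coprime 2 _).2 (Nat.coprime_two_left.2 (odd_two_mul_add_one k))
  refine h2.mul_left_cancel ?_
  have hzero : ((2 * k + 1 : ℕ) : ZMod (2 * k + 1)) = 0 := ZMod.natCast_self _
  push_cast at hzero ⊢
  rw [show (4 : ZMod (2 * k + 1)) = 2 ^ 2 by norm_num, ← pow_mul]
  linear_combination hzero - hs

theorem Polynomial.natDegree_modByMonic_X_pow_sub_one_lt {R : Type*} [CommRing R] [Nontrivial R]
    (f : R[X]) {m : ℕ} (hm : m ≠ 0) : (f %ₘ (X ^ m - 1)).natDegree < m := by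
  have hne : (X ^ m - C 1 : R[X]) ≠ 1 := fun h => hm <| by
    simpa only [h, natDegree_one] using (natDegree_X_pow_sub_C (n := m) (r := (1 : R))).symm
  have := natDegree_modByMonic_lt f (monic_X_pow_sub_C (1 : R) hm) hne
  rwa [natDegree_X_pow_sub_C, map_one] at this

theorem binary_bch_dihedral_minimum_distance_general
    (L E : Type*) [Field L] [Field E] [Algebra L E] [DecidableEq L]
    [Fintype L] (hcard : Fintype.card L = 4)
    (α : L)
    (m : ℕ) (hodd : Odd m)
    (ω : E) (hω : orderOf ω = m)
    (hs : ∃ s : ℕ, (2 : ZMod m) ^ (2 * s + 1) = -1)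
    (b : ℕ) (δ : ℕ)
    (p P : L[X])
    (hp : p = (Finset.range (δ - 1)).lcm (fun j => minpoly L (ω ^ (b + j))))
    (hP : P = C α * (p.comp (X ^ ((m - 1) / 2))) ^ 2) :
    ∀ t₁ t₂ : L[X],
      (t₁ * p + t₂ * P) %ₘ (X ^ m - 1) ≠ 0 →
        δ ≤ ((t₁ * p + t₂ * P) %ₘ (X ^ m - 1)).support.card := by
  intro t₁ t₂ hc
  obtain ⟨s, hs⟩ := hs
  have hroot : ∀ j < δ - 1, aeval (ω ^ (b + j)) ((t₁ * p + t₂ * P) %ₘ (X ^ m - 1)) = 0 := by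
    intro j hj
    have hzm : (ω ^ (b + j)) ^ m = 1 := by
      rw [← pow_mul, mul_comm, pow_mul, ← hω, pow_orderOf_eq_one, one_pow]
    have hpz : aeval (ω ^ (b + j)) p = 0 := hp ▸ aeval_eq_zero_of_dvd_aeval_eq_zero
      (Finset.dvd_lcm (Finset.mem_range.2 hj)) (minpoly.aeval L _)
    have hPz : aeval (ω ^ (b + j)) P = 0 := by
      have hfrob : (ω ^ (b + j)) ^ ((m - 1) / 2) = (ω ^ (b + j)) ^ Fintype.card L ^ s := by
        rw [hcard]
        exact pow_eq_pow_of_modEq (Nat.sub_one_div_two_modEq_four_pow hodd hs) hzm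
      simp [hP, FiniteField.aeval_comp_X_pow_eq_zero hfrob hpz]
    rw [aeval_modByMonic_eq_self_of_root (by simp [hzm])]
    simp [hpz, hPz]
  have hdeg := natDegree_modByMonic_X_pow_sub_one_lt (t₁ * p + t₂ * P) hodd.pos.ne'
  have := lt_card_support_of_aeval_pow_eq_zero hc (hω ▸ hdeg) hroot
  omega

/-- (Binary BCH-dihedral codes have prescribed minimum distance.) With
`L = F_4 = F_2[α]`, `ω` of order `m` (`m ≥ 3` odd) in a finite extension `E`,
`2^{2s+1} ≡ −1 (mod m)` for some `s`, `p = lcm{M_{ω^b}, …, M_{ω^{b+δ−2}}}` and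
`P = α·(p(x^{(m−1)/2}))²`, every nonzero folded codeword
`t₁·p + t₂·P mod (x^m − 1)` has at least `δ` nonzero coefficients; hence the
binary dihedral code of length `2m` generated by `p` has minimum distance at
least `δ`. -/
theorem binary_bch_dihedral_minimum_distance
    (L E : Type*) [Field L] [Field E] [Algebra L E] [DecidableEq L]
    [Fintype L] [Fintype E] (hcard : Fintype.card L = 4)
    (α : L) (hα : α ^ 2 + α + 1 = 0)
    (m : ℕ) (hm : 3 ≤ m) (hodd : Odd m)
    (ω : E) (hω : orderOf ω = m)
    (hs : ∃ s : ℕ, (2 : ZMod m) ^ (2 * s + 1) = -1)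
    (b : ℕ) (δ : ℕ) (hδ2 : 2 ≤ δ) (hδm : δ ≤ m + 1)
    (p P : L[X])
    (hp : p = (Finset.range (δ - 1)).lcm (fun j => minpoly L (ω ^ (b + j))))
    (hP : P = C α * (p.comp (X ^ ((m - 1) / 2))) ^ 2) :
    ∀ t₁ t₂ : L[X],
      (t₁ * p + t₂ * P) %ₘ (X ^ m - 1) ≠ 0 →
        δ ≤ ((t₁ * p + t₂ * P) %ₘ (X ^ m - 1)).support.card :=
  binary_bch_dihedral_minimum_distance_general L E hcard α m hodd ω hω hs b δ p P hp hP
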